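/- The complete bipartite graph K_{2,3} is 2-monophilic: for every assignment of 2-element color lists to its five vertices, there exist at least two distinct proper colorings from the lists. -/

import Mathlib

open SimpleGraph

open Classical in
/-- Number of proper colorings of `G` from list assignment `L`: functions `γ` with
`γ v ∈ L v` for all `v` and `γ v ≠ γ w` for adjacent `v, w`. -/
noncomputable def colCount {V : Type*} [Fintype V] (G : SimpleGraph V) (L : V → Finset ℕ) : ℕ :=
  ((Fintype.piFinset L).filter fun γ => ∀ v w, G.Adj v w → γ v ≠ γ w).card


/-- `G` is `n`-monophilic: the constant assignment `{1,…,n}` minimizes the number of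
list colorings among all `n`-list assignments. -/
def Monophilic {V : Type*} [Fintype V] (G : SimpleGraph V) (n : ℕ) : Prop :=
  ∀ L : V → Finset ℕ, (∀ v, (L v).card = n) →
    colCount G (fun _ => Finset.Icc 1 n) ≤ colCount G L

/-!
Colour the two vertices of the small side first, by a pair `(x, y)`; the pair extends to a
proper colouring unless some vertex of the big side has list exactly `{x, y}`. Two extendable
pairs give two colourings, and so does one extendable pair `(x, y)` together with a list
disjoint from `{x, y}`, since that vertex may take either of its colours.

If the two small-side lists share a colour `c`, the pair `(c, c)` extends; either some list
misses `c`, or every list contains `c` and a pair avoiding `c` extends too. If they are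
disjoint, a list `{x, y}` blocks at most one of the four pairs, so with three lists some pair
`(x, y)` extends; the opposite pair `(x', y')` either extends as well or is blocked by a list
`{x', y'}` disjoint from `{x, y}`.
-/

open Finset

theorem Finset.eq_pair_of_subset_of_card_eq_two {α : Type*} [DecidableEq α] {s : Finset α}
    {x y : α} (h : s ⊆ {x, y}) (hs : #s = 2) : s = {x, y} :=
  eq_of_subset_of_card_le h (hs ▸ card_le_two)

section ListColoring

variable {V : Type*} [Fintype V] {G : SimpleGraph V} {L : V → Finset ℕ}

open Classical in
noncomputable def listColorings (G : SimpleGraph V) (L : V → Finset ℕ) : Finset (V → ℕ) :=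
  (Fintype.piFinset L).filter fun γ => ∀ v w, G.Adj v w → γ v ≠ γ w

theorem colCount_eq_card_listColorings : colCount G L = #(listColorings G L) := rfl

theorem mem_listColorings {γ : V → ℕ} :
    γ ∈ listColorings G L ↔
      (∀ v, γ v ∈ L v) ∧ ∀ v w, G.Adj v w → γ v ≠ γ w := by
  simp only [listColorings, mem_filter, Fintype.mem_piFinset]

theorem two_le_colCount_of_ne {γ δ : V → ℕ} (hγ : γ ∈ listColorings G L)
    (hδ : δ ∈ listColorings G L) (h : γ ≠ δ) : 2 ≤ colCount G L := by
  rw [colCount_eq_card_listColorings]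
  exact one_lt_card.2 ⟨γ, hγ, δ, hδ, h⟩

end ListColoring

section CompleteBipartite

variable {α β : Type*} [Fintype α] [Fintype β] {L : α ⊕ β → Finset ℕ}

theorem sumElim_mem_listColorings_completeBipartiteGraph {a : α → ℕ} {b : β → ℕ} :
    Sum.elim a b ∈ listColorings (completeBipartiteGraph α β) L ↔
      (∀ i, a i ∈ L (.inl i)) ∧ (∀ j, b j ∈ L (.inr j)) ∧ ∀ i j, a i ≠ b j := by
  simp only [mem_listColorings, Sum.forall, Sum.elim_inl, Sum.elim_inr,
    completeBipartiteGraph_adj, Sum.isLeft_inl, Sum.isRight_inl, Sum.isLeft_inr,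
    Sum.isRight_inr]
  grind

def Extendable (L : α ⊕ β → Finset ℕ) (a : α → ℕ) : Prop :=
  (∀ i, a i ∈ L (.inl i)) ∧ ∀ j, ∃ d ∈ L (.inr j), ∀ i, a i ≠ d

theorem Extendable.exists_sumElim_mem_listColorings {a : α → ℕ} (ha : Extendable L a) :
    ∃ b, Sum.elim a b ∈ listColorings (completeBipartiteGraph α β) L := by
  choose b hbL hba using ha.2
  exact ⟨b, sumElim_mem_listColorings_completeBipartiteGraph.2
    ⟨ha.1, hbL, fun i j => hba j i⟩⟩

theorem two_le_colCount_of_extendable_of_ne {a a' : α → ℕ} (ha : Extendable L a)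
    (ha' : Extendable L a') (h : a ≠ a') : 2 ≤ colCount (completeBipartiteGraph α β) L := by
  obtain ⟨b, hb⟩ := ha.exists_sumElim_mem_listColorings
  obtain ⟨b', hb'⟩ := ha'.exists_sumElim_mem_listColorings
  exact two_le_colCount_of_ne hb hb' fun h' => h (by simpa using congrArg (· ∘ Sum.inl) h')

theorem two_le_colCount_of_extendable_of_forall_ne {a : α → ℕ} (ha : Extendable L a)
    (j₀ : β) (hj₀ : 1 < #(L (.inr j₀))) (hfree : ∀ d ∈ L (.inr j₀), ∀ i, a i ≠ d) :
    2 ≤ colCount (completeBipartiteGraph α β) L := by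
  classical
  obtain ⟨b, hb⟩ := ha.exists_sumElim_mem_listColorings
  obtain ⟨haL, hbL, hab⟩ := sumElim_mem_listColorings_completeBipartiteGraph.1 hb
  obtain ⟨d, hd, hdb⟩ := exists_mem_ne hj₀ (b j₀)
  have hb' : Sum.elim a (Function.update b j₀ d) ∈
      listColorings (completeBipartiteGraph α β) L := by
    refine sumElim_mem_listColorings_completeBipartiteGraph.2
      ⟨haL, fun j => ?_, fun i j => ?_⟩ <;> rcases eq_or_ne j j₀ with rfl | hj
    · simpa using hd
    · simpa [hj] using hbL j
    · simpa using hfree d hd i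
    · simpa [hj] using hab i j
  refine two_le_colCount_of_ne hb hb' fun h => hdb ?_
  simpa using (congrFun h (.inr j₀)).symm

theorem two_le_colCount_of_extendable_of_disjoint [Nonempty α] {a a' : α → ℕ}
    (ha : Extendable L a) (ha'L : ∀ i, a' i ∈ L (.inl i)) (hdisj : ∀ i i', a i ≠ a' i')
    (hL : ∀ j, 1 < #(L (.inr j))) : 2 ≤ colCount (completeBipartiteGraph α β) L := by
  by_cases ha' : Extendable L a'
  · obtain ⟨i⟩ := ‹Nonempty α›
    exact two_le_colCount_of_extendable_of_ne ha ha' fun h => hdisj i i (congrFun h i)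
  · obtain ⟨j, hj⟩ : ∃ j, ∀ d ∈ L (.inr j), ∃ i', a' i' = d := by
      simpa [Extendable, ha'L] using ha'
    refine two_le_colCount_of_extendable_of_forall_ne ha j (hL j) fun d hd i => ?_
    obtain ⟨i', rfl⟩ := hj d hd
    exact hdisj i i'

theorem colCount_completeBipartiteGraph_Icc_one_two_le [Nonempty α] [Nonempty β] :
    colCount (completeBipartiteGraph α β) (fun _ => Icc 1 2) ≤ 2 := by
  classical
  obtain ⟨i₀⟩ := ‹Nonempty α›
  obtain ⟨j₀⟩ := ‹Nonempty β›
  have hsub : listColorings (completeBipartiteGraph α β) (fun _ => Icc 1 2) ⊆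
      (Icc 1 2).image fun c => Sum.elim (fun _ => c) (fun _ => 3 - c) := by
    intro γ hγ
    obtain ⟨hval, hadj⟩ := mem_listColorings.1 hγ
    simp only [mem_Icc] at hval
    have hne : ∀ i j, γ (.inl i) ≠ γ (.inr j) := fun i j => hadj _ _ (by simp)
    refine mem_image.2 ⟨γ (.inl i₀), mem_Icc.2 (hval _), funext ?_⟩
    rintro (i | j)
    · have := hval (.inl i); have := hval (.inl i₀); have := hval (.inr j₀)
      have := hne i j₀; have := hne i₀ j₀
      simp only [Sum.elim_inl]
      omega
    · have := hval (.inl i₀); have := hval (.inr j); have := hne i₀ j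
      simp only [Sum.elim_inr]
      omega
  rw [colCount_eq_card_listColorings]
  exact (card_le_card hsub).trans (card_image_le.trans (by simp))

end CompleteBipartite

section FinTwo

variable {β : Type*} [Fintype β] {L : Fin 2 ⊕ β → Finset ℕ}

theorem two_le_colCount_of_mem_inter (hL : ∀ v, #(L v) = 2) {c : ℕ} (hc₀ : c ∈ L (.inl 0))
    (hc₁ : c ∈ L (.inl 1)) : 2 ≤ colCount (completeBipartiteGraph (Fin 2) β) L := by
  have hL' : ∀ v, 1 < #(L v) := fun v => (hL v).symm ▸ one_lt_two
  have hcc : Extendable L ![c, c] := by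
    refine ⟨by simp [Fin.forall_fin_two, hc₀, hc₁], fun j => ?_⟩
    obtain ⟨d, hd, hdc⟩ := exists_mem_ne (hL' _) c
    exact ⟨d, hd, by simp [Fin.forall_fin_two, Ne.symm hdc]⟩
  by_cases hfree : ∃ j, c ∉ L (.inr j)
  · obtain ⟨j, hj⟩ := hfree
    refine two_le_colCount_of_extendable_of_forall_ne hcc j (hL' _) fun d hd => ?_
    simpa [Fin.forall_fin_two] using ne_of_mem_of_not_mem hd hj |>.symm
  · push Not at hfree
    obtain ⟨x, hx, hxc⟩ := exists_mem_ne (hL' (.inl 0)) c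
    obtain ⟨y, hy, hyc⟩ := exists_mem_ne (hL' (.inl 1)) c
    have hxy : Extendable L ![x, y] := ⟨by simp [Fin.forall_fin_two, hx, hy],
      fun j => ⟨c, hfree j, by simp [Fin.forall_fin_two, hxc, hyc]⟩⟩
    exact two_le_colCount_of_extendable_of_ne hxy hcc fun h => hxc (by simpa using congrFun h 0)

theorem exists_extendable_of_disjoint (hβ : Fintype.card β ≤ 3) (hL : ∀ v, #(L v) = 2)
    (hdisj : Disjoint (L (.inl 0)) (L (.inl 1))) : ∃ x y, Extendable L ![x, y] := by
  classical
  by_contra! hblocked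
  set P := L (.inl 0) ×ˢ L (.inl 1)
  have hblock : ∀ p ∈ P, ∃ j, L (.inr j) = {p.1, p.2} := by
    rintro ⟨x, y⟩ hp
    obtain ⟨hx, hy⟩ := mem_product.1 hp
    obtain ⟨j, hj⟩ : ∃ j, ∀ d ∈ L (.inr j), x ≠ d → y = d := by
      simpa [Extendable, Fin.forall_fin_two, hx, hy] using hblocked x y
    refine ⟨j, eq_pair_of_subset_of_card_eq_two (fun d hd => ?_) (hL _)⟩
    have := hj d hd
    simp only [mem_insert, mem_singleton]
    omega
  have hblockers : ∀ j, #(P.filter fun p => L (.inr j) = {p.1, p.2}) ≤ 1 := by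
    refine fun j => card_le_one.2 ?_
    rintro ⟨x, y⟩ hp ⟨x', y'⟩ hp'
    simp only [P, mem_filter, mem_product] at hp hp'
    have hxy : ({x, y} : Finset ℕ) = {x', y'} := hp.2.symm.trans hp'.2
    have hx : x ∈ ({x', y'} : Finset ℕ) := hxy ▸ by simp
    have hy : y ∈ ({x', y'} : Finset ℕ) := hxy ▸ by simp
    have hAB := disjoint_left.1 hdisj
    simp only [mem_insert, mem_singleton] at hx hy
    grind
  have hcard : #P ≤ Fintype.card β := calc
    #P ≤ #(univ.biUnion fun j => P.filter fun p => L (.inr j) = {p.1, p.2}) :=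
      card_le_card fun p hp => by simpa [hp] using hblock p hp
    _ ≤ ∑ j, #(P.filter fun p => L (.inr j) = {p.1, p.2}) := card_biUnion_le
    _ ≤ ∑ _j : β, 1 := sum_le_sum fun j _ => hblockers j
    _ = Fintype.card β := by simp
  simp only [P, card_product, hL] at hcard
  omega

theorem two_le_colCount_of_disjoint (hβ : Fintype.card β ≤ 3) (hL : ∀ v, #(L v) = 2)
    (hdisj : Disjoint (L (.inl 0)) (L (.inl 1))) :
    2 ≤ colCount (completeBipartiteGraph (Fin 2) β) L := by
  have hL' : ∀ v, 1 < #(L v) := fun v => (hL v).symm ▸ one_lt_two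
  obtain ⟨x, y, hxy⟩ := exists_extendable_of_disjoint hβ hL hdisj
  obtain ⟨x', hx', hx'x⟩ := exists_mem_ne (hL' (.inl 0)) x
  obtain ⟨y', hy', hy'y⟩ := exists_mem_ne (hL' (.inl 1)) y
  refine two_le_colCount_of_extendable_of_disjoint hxy (a' := ![x', y'])
    (by simp [Fin.forall_fin_two, hx', hy']) ?_ fun j => hL' _
  have hx : x ∈ L (.inl 0) := by simpa using hxy.1 0
  have hy : y ∈ L (.inl 1) := by simpa using hxy.1 1
  simp [Fin.forall_fin_two, hx'x.symm, hy'y.symm, hdisj.forall_ne_finset hx hy',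
    (hdisj.forall_ne_finset hx' hy).symm]

theorem two_le_colCount_completeBipartiteGraph_fin_two (hβ : Fintype.card β ≤ 3)
    (hL : ∀ v, #(L v) = 2) : 2 ≤ colCount (completeBipartiteGraph (Fin 2) β) L := by
  by_cases hdisj : Disjoint (L (.inl 0)) (L (.inl 1))
  · exact two_le_colCount_of_disjoint hβ hL hdisj
  · obtain ⟨c, hc₀, hc₁⟩ := not_disjoint_iff.1 hdisj
    exact two_le_colCount_of_mem_inter hL hc₀ hc₁

end FinTwo

theorem stmt12 :
    Monophilic (completeBipartiteGraph (Fin 2) (Fin 3)) 2 ∧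
      ∀ L : Fin 2 ⊕ Fin 3 → Finset ℕ, (∀ v, (L v).card = 2) →
        2 ≤ colCount (completeBipartiteGraph (Fin 2) (Fin 3)) L := by
  have key : ∀ L : Fin 2 ⊕ Fin 3 → Finset ℕ, (∀ v, (L v).card = 2) →
      2 ≤ colCount (completeBipartiteGraph (Fin 2) (Fin 3)) L :=
    fun L hL => two_le_colCount_completeBipartiteGraph_fin_two (by simp) hL
  exact ⟨fun L hL => colCount_completeBipartiteGraph_Icc_one_two_le.trans (key L hL), key⟩
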